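/- arXiv:2504.01207 — 4 statements merged into one kernel-verified Lean document; each statement's English description precedes it below -/
import Mathlib

section
/- Let V be a finite-dimensional real inner product space of dimension n and K a symmetric bilinear form on V with associated self-adjoint operator having eigenvalues λ₁ ≤ λ₂ ≤ ... ≤ λₙ. Then for any k-dimensional subspace W of V, the trace of the restriction of K to W (computed with the induced inner product) is at least λ₁ + λ₂ + ... + λ_k. -/
/-!
Expand each `e i` in the eigenbasis `b`: then `⟪K (e i), e i⟫ = ∑ j, λ j ⟪b j, e i⟫²`, so the
trace of `K` on the span of `e` is `∑ j, λ j s j` with weights `s j = ∑ i, ⟪b j, e i⟫²`. Bessel's inequality gives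
`s j ≤ 1` and Parseval gives `∑ j, s j = k`; among such weights, `∑ j, λ j s j` is smallest when
all the mass sits on the `k` lowest eigenvalues.
-/

open scoped RealInnerProductSpace

open Finset

/-- The bathtub principle. -/
theorem sum_le_sum_mul_of_threshold {ι : Type*} [Fintype ι] [DecidableEq ι]
    (f s : ι → ℝ) (A : Finset ι) (μ : ℝ)
    (hA : ∀ j ∈ A, f j ≤ μ) (hAc : ∀ j ∉ A, μ ≤ f j)
    (hs0 : ∀ j, 0 ≤ s j) (hs1 : ∀ j, s j ≤ 1) (hsum : ∑ j, s j = #A) :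
    ∑ j ∈ A, f j ≤ ∑ j, f j * s j := by
  have termwise : ∀ j, (if j ∈ A then f j - μ else 0) ≤ (f j - μ) * s j := by
    intro j
    split_ifs with hj
    · nlinarith [hA j hj, hs1 j]
    · nlinarith [hAc j hj, hs0 j]
  have shifted : ∑ j ∈ A, (f j - μ) ≤ ∑ j, (f j - μ) * s j := by
    rw [← sum_ite_mem_eq]
    exact sum_le_sum fun j _ => termwise j
  simp only [sum_sub_distrib, sub_mul, ← mul_sum, hsum, sum_const, nsmul_eq_mul] at shifted
  linarith

theorem sum_castLE_le_sum_mul_of_monotone {n k : ℕ} (hkn : k ≤ n)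
    (f : Fin n → ℝ) (hf : Monotone f) (s : Fin n → ℝ)
    (hs0 : ∀ j, 0 ≤ s j) (hs1 : ∀ j, s j ≤ 1) (hsum : ∑ j, s j = k) :
    ∑ i : Fin k, f (Fin.castLE hkn i) ≤ ∑ j, f j * s j := by
  rcases Nat.eq_zero_or_pos n with rfl | hn
  · obtain rfl : k = 0 := Nat.le_zero.mp hkn
    simp
  -- `k - 1` truncates to `0` when `k = 0`, where `f 0` is still a valid threshold.
  set μ := f ⟨k - 1, by omega⟩
  have hA : ∀ j ∈ univ.map (Fin.castLEEmb hkn), f j ≤ μ := by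
    simp only [mem_map, mem_univ, true_and, Fin.castLEEmb_apply]
    rintro _ ⟨i, rfl⟩
    exact hf (Fin.le_def.mpr (by simp only [Fin.val_castLE]; omega))
  have hAc : ∀ j ∉ univ.map (Fin.castLEEmb hkn), μ ≤ f j := by
    intro j hj
    have hkj : k ≤ j := by
      by_contra! hjk
      exact hj (mem_map.mpr ⟨⟨j, hjk⟩, mem_univ _, Fin.ext rfl⟩)
    exact hf (Fin.le_def.mpr (by dsimp only; omega))
  simpa using sum_le_sum_mul_of_threshold f s _ μ hA hAc hs0 hs1 (by simpa using hsum)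

section Eigenbasis

variable {V ι : Type*} [NormedAddCommGroup V] [InnerProductSpace ℝ V] [Fintype ι]

theorem inner_apply_self_eq_sum_of_eigenbasis (K : V →ₗ[ℝ] V) (lam : ι → ℝ)
    (b : OrthonormalBasis ι ℝ V) (hb : ∀ i, K (b i) = lam i • b i) (x : V) :
    ⟪K x, x⟫ = ∑ j, lam j * ⟪b j, x⟫ ^ 2 := by
  nth_rw 1 [← b.sum_repr' x]
  simp only [map_sum, map_smul, hb, sum_inner, real_inner_smul_left]
  exact sum_congr rfl fun j _ => by rw [real_inner_comm x]; ring

theorem sum_sq_inner_orthonormal_le_one {κ : Type*} [Fintype κ] {e : κ → V}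
    (he : Orthonormal ℝ e) (b : OrthonormalBasis ι ℝ V) (j : ι) :
    ∑ i, ⟪b j, e i⟫ ^ 2 ≤ 1 := by
  have bessel := he.sum_inner_products_le (s := univ) (b j)
  simp only [Real.norm_eq_abs, sq_abs, b.orthonormal.1 j, one_pow] at bessel
  simpa only [real_inner_comm (b j)] using bessel

theorem sum_sum_sq_inner_orthonormal {κ : Type*} [Fintype κ] {e : κ → V}
    (he : Orthonormal ℝ e) (b : OrthonormalBasis ι ℝ V) :
    ∑ j, ∑ i, ⟪b j, e i⟫ ^ 2 = Fintype.card κ := by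
  rw [sum_comm]
  simp [b.sum_sq_inner_right, he.1]

end Eigenbasis

theorem stmt_0_general
    {V : Type*} [NormedAddCommGroup V] [InnerProductSpace ℝ V]
    {n k : ℕ} (hkn : k ≤ n)
    (K : V →ₗ[ℝ] V)
    (lam : Fin n → ℝ) (hmono : Monotone lam)
    (b : OrthonormalBasis (Fin n) ℝ V) (hb : ∀ i, K (b i) = lam i • b i)
    (e : Fin k → V) (he : Orthonormal ℝ e) :
    ∑ i : Fin k, lam (Fin.castLE hkn i) ≤ ∑ i : Fin k, ⟪K (e i), e i⟫ := by
  have trace_eq : ∑ i, ⟪K (e i), e i⟫ = ∑ j, lam j * ∑ i, ⟪b j, e i⟫ ^ 2 := by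
    simp only [inner_apply_self_eq_sum_of_eigenbasis K lam b hb, mul_sum]
    exact sum_comm
  rw [trace_eq]
  refine sum_castLE_le_sum_mul_of_monotone hkn lam hmono _
    (fun j => sum_nonneg fun i _ => sq_nonneg _)
    (sum_sq_inner_orthonormal_le_one he b) ?_
  simpa using sum_sum_sq_inner_orthonormal he b

/-- The trace of a self-adjoint operator restricted to a `k`-dimensional subspace
is at least the sum of its `k` lowest eigenvalues. -/
theorem stmt_0
    {V : Type*} [NormedAddCommGroup V] [InnerProductSpace ℝ V]
    {n k : ℕ} (hkn : k ≤ n)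
    (hdim : Module.finrank ℝ V = n)
    (K : V →ₗ[ℝ] V) (hK : K.IsSymmetric)
    (lam : Fin n → ℝ) (hmono : Monotone lam)
    (b : OrthonormalBasis (Fin n) ℝ V) (hb : ∀ i, K (b i) = lam i • b i)
    (W : Submodule ℝ V) (hW : Module.finrank ℝ W = k)
    (e : Fin k → V) (he : Orthonormal ℝ e) (heW : ∀ i, e i ∈ W)
    (hspan : Submodule.span ℝ (Set.range e) = W) :
    ∑ i : Fin k, lam (Fin.castLE hkn i) ≤ ∑ i : Fin k, ⟪K (e i), e i⟫ :=
  stmt_0_general hkn K lam hmono b hb e he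
end

section
/- Let V be an n-dimensional real inner product space and K a self-adjoint operator on V with eigenvalues λ₁ ≤ ... ≤ λₙ. Then for any k-dimensional subspace W of V, the trace of K restricted to W is at most λ_{n-k+1} + ... + λₙ. -/
open scoped RealInnerProductSpace

/-- The trace of a self-adjoint operator restricted to a `k`-dimensional subspace
is at most the sum of its `k` largest eigenvalues. -/
theorem stmt_1
    {V : Type*} [NormedAddCommGroup V] [InnerProductSpace ℝ V]
    {n k : ℕ} (hkn : k ≤ n)
    (hdim : Module.finrank ℝ V = n)
    (K : V →ₗ[ℝ] V) (hK : K.IsSymmetric)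
    (lam : Fin n → ℝ) (hmono : Monotone lam)
    (b : OrthonormalBasis (Fin n) ℝ V) (hb : ∀ i, K (b i) = lam i • b i)
    (W : Submodule ℝ V) (hW : Module.finrank ℝ W = k)
    (e : Fin k → V) (he : Orthonormal ℝ e) (heW : ∀ i, e i ∈ W)
    (hspan : Submodule.span ℝ (Set.range e) = W) :
    ∑ i : Fin k, ⟪K (e i), e i⟫ ≤
      ∑ i : Fin k, lam ⟨n - k + i.1, by have := i.isLt; omega⟩ := by
  rcases Nat.eq_zero_or_pos k with hk0 | hk0
  · subst hk0; simp
  set p : Fin k → Fin n → ℝ := fun i j => ⟪b j, e i⟫ with hp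
  -- A : eigen-expansion of the quadratic form
  have hA : ∀ x : V, ⟪K x, x⟫ = ∑ j, lam j * (⟪b j, x⟫)^2 := by
    intro x
    conv_lhs => rw [← b.sum_repr x]
    rw [map_sum, sum_inner]
    refine Finset.sum_congr rfl fun j _ => ?_
    rw [map_smul, hb j, smul_smul, real_inner_smul_left, b.repr_apply_apply,
      b.sum_repr x]
    ring
  -- B : Parseval for unit vectors e i
  have hB : ∀ i, ∑ j, (p i j)^2 = 1 := by
    intro i
    have h1 : ⟪e i, e i⟫ = 1 := by
      rw [real_inner_self_eq_norm_sq, he.1 i]; norm_num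
    calc ∑ j, (p i j)^2 = ⟪∑ j, ⟪b j, e i⟫ • b j, e i⟫ := by
          rw [sum_inner]
          refine Finset.sum_congr rfl fun j _ => ?_
          rw [real_inner_smul_left]; ring
      _ = 1 := by
          have := b.sum_repr (e i)
          simp_rw [b.repr_apply_apply] at this
          rw [this, h1]
  -- C : Bessel
  have hC : ∀ j, ∑ i, (p i j)^2 ≤ 1 := by
    intro j
    have := he.sum_inner_products_le (x := b j) (s := Finset.univ)
    have hbj : ‖b j‖ = 1 := b.orthonormal.1 j
    simp only [Real.norm_eq_abs, sq_abs, hbj, one_pow] at this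
    calc ∑ i, (p i j)^2 = ∑ i, (⟪e i, b j⟫)^2 := by
          refine Finset.sum_congr rfl fun i _ => ?_
          rw [hp, real_inner_comm]
      _ ≤ 1 := this
  set c : Fin n → ℝ := fun j => ∑ i, (p i j)^2 with hc
  have hc0 : ∀ j, 0 ≤ c j := fun j => Finset.sum_nonneg fun i _ => sq_nonneg _
  have hcsum : ∑ j, c j = (k : ℝ) := by
    rw [hc]
    simp only
    rw [Finset.sum_comm]
    simp [hB]
  have hLHS : ∑ i : Fin k, ⟪K (e i), e i⟫ = ∑ j, lam j * c j := by
    simp_rw [hA, hc, Finset.mul_sum]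
    rw [Finset.sum_comm]
  rw [hLHS]
  -- the majorization step
  have hnk : n - k < n := by omega
  set t : ℝ := lam ⟨n - k, hnk⟩ with ht
  have key : ∀ j : Fin n, (lam j - t) * c j ≤ if n - k ≤ j.1 then lam j - t else 0 := by
    intro j
    by_cases hj : n - k ≤ j.1
    · rw [if_pos hj]
      have h1 : 0 ≤ lam j - t := by
        have := hmono (a := ⟨n - k, hnk⟩) (b := j) hj
        linarith
      nlinarith [hC j, hc0 j]
    · rw [if_neg hj]
      have h1 : lam j - t ≤ 0 := by
        have := hmono (a := j) (b := ⟨n - k, hnk⟩) (by omega : j.1 ≤ n - k)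
        linarith
      nlinarith [hc0 j]
  have hsum2 : ∑ j, (if n - k ≤ j.1 then lam j - t else 0)
      = ∑ i : Fin k, (lam ⟨n - k + i.1, by have := i.isLt; omega⟩ - t) := by
    rw [← Finset.sum_filter]
    refine Finset.sum_nbij' (i := fun j => (⟨j.1 - (n - k), by
        have := j.2; omega⟩ : Fin k))
      (j := fun i => (⟨n - k + i.1, by have := i.isLt; omega⟩ : Fin n)) ?_ ?_ ?_ ?_ ?_
    · intro a ha; exact Finset.mem_univ _
    · intro a ha
      simp only [Finset.mem_filter, Finset.mem_univ, true_and]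
      omega
    · intro a ha
      simp only [Finset.mem_filter, Finset.mem_univ, true_and] at ha
      apply Fin.ext; simp; omega
    · intro a ha; apply Fin.ext; simp
    · intro a ha
      simp only [Finset.mem_filter, Finset.mem_univ, true_and] at ha
      congr 1
      congr 1
      apply Fin.ext; simp; omega
  calc ∑ j, lam j * c j = ∑ j, (lam j - t) * c j + t * ∑ j, c j := by
        rw [Finset.mul_sum, ← Finset.sum_add_distrib]
        refine Finset.sum_congr rfl fun j _ => ?_; ring
    _ ≤ ∑ j, (if n - k ≤ j.1 then lam j - t else 0) + t * k := by
        rw [hcsum]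
        have := Finset.sum_le_sum (s := Finset.univ) fun j _ => key j
        linarith
    _ = ∑ i : Fin k, lam ⟨n - k + i.1, by have := i.isLt; omega⟩ := by
        rw [hsum2, Finset.sum_sub_distrib]
        simp [mul_comm]
end

section
/- Let V be an n-dimensional real inner product space, K a self-adjoint operator on V, and W a k-dimensional subspace. For any s ≤ k with orthonormal basis e₁,...,e_k of W, unit vector u orthogonal to W, and the curve of subspaces W_ε spanned by e₁,...,e_{s-1}, (e_s + ε u)/√(1+ε²), e_{s+1},...,e_k, the derivative at ε = 0 of the W_ε-trace of K equals 2⟨K e_s, u⟩. -/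
open scoped RealInnerProductSpace

/-!
Only the `s`-th summand depends on `ε`. It equals `(1 + ε²)⁻¹ ⟪K v_ε, v_ε⟫` with
`v_ε = e s + ε • u`; the factor `(1 + ε²)⁻¹` is stationary at `ε = 0`, and along the line
`v_ε` the quadratic form of `K` is a polynomial in `ε` with linear coefficient
`⟪K (e s), u⟫ + ⟪K u, e s⟫ = 2 ⟪K (e s), u⟫` by symmetry of `K`.
-/

theorem LinearMap.IsSymmetric.hasDerivAt_inner_map_add_smul
    {V : Type*} [NormedAddCommGroup V] [InnerProductSpace ℝ V]
    {K : V →ₗ[ℝ] V} (hK : K.IsSymmetric) (x y : V) (t : ℝ) :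
    HasDerivAt (fun ε : ℝ => ⟪K (x + ε • y), x + ε • y⟫) (2 * ⟪K (x + t • y), y⟫) t := by
  have hpoly : (fun ε : ℝ => ⟪K (x + ε • y), x + ε • y⟫)
      = fun ε => ⟪K x, x⟫ + ε * (2 * ⟪K x, y⟫) + ε ^ 2 * ⟪K y, y⟫ := by
    funext ε
    have hyx : ⟪K y, x⟫ = ⟪K x, y⟫ := by rw [hK, real_inner_comm]
    simp only [map_add, map_smul, inner_add_left, inner_add_right, real_inner_smul_left,
      real_inner_smul_right, hyx]
    ring
  rw [hpoly]
  refine ((((hasDerivAt_id' t).mul_const (2 * ⟪K x, y⟫)).const_add ⟪K x, x⟫).fun_add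
    ((hasDerivAt_pow 2 t).mul_const ⟪K y, y⟫)).congr_deriv ?_
  simp only [map_add, map_smul, inner_add_left, real_inner_smul_left]
  ring

theorem hasDerivAt_inv_one_add_sq_zero :
    HasDerivAt (fun ε : ℝ => (1 + ε ^ 2)⁻¹) 0 0 := by
  simpa using ((hasDerivAt_pow 2 (0 : ℝ)).const_add 1).fun_inv (by norm_num)

theorem inner_map_smul_smul {V : Type*} [NormedAddCommGroup V] [InnerProductSpace ℝ V]
    (K : V →ₗ[ℝ] V) (c : ℝ) (v : V) :
    ⟪K (c • v), c • v⟫ = c ^ 2 * ⟪K v, v⟫ := by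
  simp only [map_smul, real_inner_smul_left, real_inner_smul_right]
  ring

theorem LinearMap.IsSymmetric.hasDerivAt_inner_map_normalized_add_smul
    {V : Type*} [NormedAddCommGroup V] [InnerProductSpace ℝ V]
    {K : V →ₗ[ℝ] V} (hK : K.IsSymmetric) (x y : V) :
    HasDerivAt
      (fun ε : ℝ => ⟪K ((Real.sqrt (1 + ε ^ 2))⁻¹ • (x + ε • y)),
        (Real.sqrt (1 + ε ^ 2))⁻¹ • (x + ε • y)⟫)
      (2 * ⟪K x, y⟫) 0 := by
  have hscale : ∀ ε : ℝ, ((Real.sqrt (1 + ε ^ 2))⁻¹) ^ 2 = (1 + ε ^ 2)⁻¹ := fun ε => by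
    rw [inv_pow, Real.sq_sqrt (by positivity)]
  simp only [inner_map_smul_smul, hscale]
  refine (hasDerivAt_inv_one_add_sq_zero.fun_mul
    (hK.hasDerivAt_inner_map_add_smul x y 0)).congr_deriv ?_
  simp

theorem stmt_2_general
    {V : Type*} [NormedAddCommGroup V] [InnerProductSpace ℝ V]
    {k : ℕ}
    (K : V →ₗ[ℝ] V) (hK : K.IsSymmetric)
    (e : Fin k → V)
    (u : V)
    (s : Fin k) :
    HasDerivAt
      (fun ε : ℝ => ∑ i : Fin k,
        ⟪K (if i = s then (Real.sqrt (1 + ε ^ 2))⁻¹ • (e s + ε • u) else e i),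
          (if i = s then (Real.sqrt (1 + ε ^ 2))⁻¹ • (e s + ε • u) else e i)⟫)
      (2 * ⟪K (e s), u⟫) 0 := by
  have hterm : ∀ i ∈ Finset.univ, HasDerivAt
      (fun ε : ℝ => ⟪K (if i = s then (Real.sqrt (1 + ε ^ 2))⁻¹ • (e s + ε • u) else e i),
          (if i = s then (Real.sqrt (1 + ε ^ 2))⁻¹ • (e s + ε • u) else e i)⟫)
      (if i = s then 2 * ⟪K (e s), u⟫ else 0) 0 := by
    intro i _
    split_ifs
    · exact hK.hasDerivAt_inner_map_normalized_add_smul (e s) u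
    · exact hasDerivAt_const _ _
  simpa using HasDerivAt.fun_sum hterm

/-- First variation of the trace functional on the Grassmannian: rotating one basis
vector `e s` towards a unit normal `u`, the derivative at `ε = 0` of the trace of `K`
over the rotated subspace is `2 ⟪K (e s), u⟫`. -/
theorem stmt_2
    {V : Type*} [NormedAddCommGroup V] [InnerProductSpace ℝ V]
    [FiniteDimensional ℝ V]
    {k : ℕ}
    (K : V →ₗ[ℝ] V) (hK : K.IsSymmetric)
    (e : Fin k → V) (he : Orthonormal ℝ e)
    (u : V) (hu : ‖u‖ = 1) (hue : ∀ i, ⟪u, e i⟫ = 0)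
    (s : Fin k) :
    HasDerivAt
      (fun ε : ℝ => ∑ i : Fin k,
        ⟪K (if i = s then (Real.sqrt (1 + ε ^ 2))⁻¹ • (e s + ε • u) else e i),
          (if i = s then (Real.sqrt (1 + ε ^ 2))⁻¹ • (e s + ε • u) else e i)⟫)
      (2 * ⟪K (e s), u⟫) 0 :=
  stmt_2_general K hK e u s
end

section
/- Let Σ be a null hyperplane in an (n+1)-dimensional Lorentzian vector space with radical spanned by e, K a symmetric bilinear form on Σ with K(·,e) = 0, V₀ a spacelike section with eigenvalues λ₁ ≤ ... ≤ λ_{n−1} of the operator associated to K|_{V₀}. Then for every 1 ≤ k ≤ n−1, the infimum of tr_W(K) over k-dimensional spacelike subspaces W ⊆ Σ equals λ₁ + ... + λ_k, and it is attained. -/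
/-!
Write a `B`-orthonormal family in `S` as `f i = v i + c i • e` with `v i ∈ V₀`. Since `e` lies in
the radical of both `B` and `K` on `S`, it drops out, and the problem lives in `V₀`. In the
eigenbasis `g` the coefficient matrix `a i j = B (g j) (v i)` has orthonormal rows and
`∑ i, K (f i) (f i) = ∑ j, lam j * μ j` with column weights `μ j = ∑ i, a i j ^ 2`. By Bessel's
inequality `0 ≤ μ j ≤ 1`, and `∑ j, μ j = k`; such a weighted sum is smallest when the weight
sits on the `k` smallest eigenvalues, which is attained by `f = g ∘ Fin.castLE`.
-/

open Finset

theorem sum_sq_le_one_of_orthonormal_rows {ι κ : Type*} [Fintype ι] [Fintype κ] [DecidableEq ι]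
    (a : ι → κ → ℝ) (h : ∀ i i', ∑ j, a i j * a i' j = if i = i' then 1 else 0)
    (j : κ) : ∑ i, a i j ^ 2 ≤ 1 := by
  classical
  let u : ι → EuclideanSpace ℝ κ := fun i => WithLp.toLp 2 (a i)
  have hu : Orthonormal ℝ u := by
    rw [orthonormal_iff_ite]
    intro i i'
    simpa [u, PiLp.inner_apply, mul_comm] using h i i'
  have hinner : ∀ i, inner ℝ (u i) (EuclideanSpace.single j (1 : ℝ)) = a i j := by
    intro i
    simp [u, real_inner_comm, EuclideanSpace.inner_single_left]
  simpa [hinner, PiLp.norm_single] using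
    hu.sum_inner_products_le (EuclideanSpace.single j (1 : ℝ)) (s := univ)

theorem sum_le_sum_mul_of_threshold_s17 {ι : Type*} [Fintype ι] (s : Finset ι) (lam μ : ι → ℝ)
    (c : ℝ) (hs : ∀ i ∈ s, lam i ≤ c) (hsc : ∀ i ∉ s, c ≤ lam i)
    (hμ0 : ∀ i, 0 ≤ μ i) (hμ1 : ∀ i, μ i ≤ 1) (hμ : ∑ i, μ i = #s) :
    ∑ i ∈ s, lam i ≤ ∑ i, lam i * μ i := by
  classical
  -- the `c`-terms cancel because `∑ i, μ i = #s`
  have hdiff : ∑ i, lam i * μ i - ∑ i ∈ s, lam i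
      = ∑ i, (lam i - c) * (μ i - if i ∈ s then 1 else 0) := by
    simp only [mul_sub, sub_mul, sum_sub_distrib, mul_ite, mul_one, mul_zero,
      ← mul_sum, hμ, sum_ite_mem, univ_inter, sum_const, nsmul_eq_mul]
    ring
  have hterm : ∀ i, 0 ≤ (lam i - c) * (μ i - if i ∈ s then 1 else 0) := by
    intro i
    by_cases hi : i ∈ s
    · simp only [hi, if_true]
      exact mul_nonneg_of_nonpos_of_nonpos (by linarith [hs i hi]) (by linarith [hμ1 i])
    · simp only [hi, if_false, sub_zero]
      exact mul_nonneg (by linarith [hsc i hi]) (hμ0 i)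
  linarith [sum_nonneg fun i (_ : i ∈ univ) => hterm i]

theorem sum_castLE_le_sum_mul_sq_of_orthonormal_rows {k m : ℕ} (hk : 1 ≤ k) (hkm : k ≤ m)
    (lam : Fin m → ℝ) (hmono : Monotone lam) (a : Fin k → Fin m → ℝ)
    (h : ∀ i i', ∑ j, a i j * a i' j = if i = i' then 1 else 0) :
    ∑ i : Fin k, lam (Fin.castLE hkm i) ≤ ∑ i, ∑ j, lam j * a i j ^ 2 := by
  have hrow : ∀ i, ∑ j, a i j ^ 2 = 1 := fun i => by simpa [sq] using h i i
  have hcol_sum : ∑ j, ∑ i, a i j ^ 2 = k := by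
    rw [sum_comm]; simp [hrow]
  have hfirst : ∀ j : Fin m, j ∈ univ.map (Fin.castLEEmb hkm) ↔ (j : ℕ) < k := fun j =>
    ⟨fun hj => by obtain ⟨i, -, rfl⟩ := mem_map.1 hj; exact i.isLt,
      fun hj => mem_map.2 ⟨⟨j, hj⟩, mem_univ _, rfl⟩⟩
  have key := sum_le_sum_mul_of_threshold_s17 (univ.map (Fin.castLEEmb hkm)) lam
    (fun j => ∑ i, a i j ^ 2) (lam ⟨k - 1, by omega⟩)
    (fun j hj => hmono (Fin.le_def.2 (by have := (hfirst j).1 hj; simp; omega)))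
    (fun j hj => hmono (Fin.le_def.2 (by have := (hfirst j).not.1 hj; simp; omega)))
    (fun j => sum_nonneg fun i _ => sq_nonneg _)
    (sum_sq_le_one_of_orthonormal_rows a h) (by simpa using hcol_sum)
  rw [sum_map] at key
  simpa [sum_comm (γ := Fin k), mul_sum] using key

section

variable {V : Type*} [AddCommGroup V] [Module ℝ V] {m : ℕ}
  {B : V →ₗ[ℝ] V →ₗ[ℝ] ℝ} {g : Fin m → V}

theorem eq_sum_smul_of_mem_span_of_orthonormal
    (hg : ∀ i j, B (g i) (g j) = if i = j then 1 else 0)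
    {v : V} (hv : v ∈ Submodule.span ℝ (Set.range g)) : v = ∑ j, B (g j) v • g j := by
  obtain ⟨c, rfl⟩ := (Submodule.mem_span_range_iff_exists_fun ℝ).1 hv
  refine sum_congr rfl fun j _ => ?_
  simp [map_sum, hg]

theorem apply_eq_sum_mul_of_mem_span_of_orthonormal
    (hg : ∀ i j, B (g i) (g j) = if i = j then 1 else 0)
    {v : V} (hv : v ∈ Submodule.span ℝ (Set.range g)) (w : V) :
    B v w = ∑ j, B (g j) v * B (g j) w := by
  conv_lhs => rw [eq_sum_smul_of_mem_span_of_orthonormal hg hv]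
  simp

theorem apply_eq_sum_eigenvalue_mul_of_mem_span
    (hg : ∀ i j, B (g i) (g j) = if i = j then 1 else 0)
    (K : V →ₗ[ℝ] V →ₗ[ℝ] ℝ) (lam : Fin m → ℝ)
    (heig : ∀ i, ∀ x ∈ Submodule.span ℝ (Set.range g), K (g i) x = lam i * B (g i) x)
    {v w : V} (hv : v ∈ Submodule.span ℝ (Set.range g)) (hw : w ∈ Submodule.span ℝ (Set.range g)) :
    K v w = ∑ j, lam j * (B (g j) v * B (g j) w) := by
  conv_lhs => rw [eq_sum_smul_of_mem_span_of_orthonormal hg hv]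
  simp only [map_sum, map_smul, LinearMap.sum_apply, LinearMap.smul_apply, smul_eq_mul, heig _ _ hw]
  exact sum_congr rfl fun j _ => by ring

end

theorem apply_add_smul_eq_of_radical {V : Type*} [AddCommGroup V] [Module ℝ V]
    (Q : V →ₗ[ℝ] V →ₗ[ℝ] ℝ) (S : Submodule ℝ V) {e : V} (heS : e ∈ S)
    (hl : ∀ y ∈ S, Q e y = 0) (hr : ∀ y ∈ S, Q y e = 0) {v w : V} (hv : v ∈ S) (hw : w ∈ S)
    (c d : ℝ) : Q (v + c • e) (w + d • e) = Q v w := by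
  simp [hl _ hw, hr _ hv, hl _ heS]

theorem stmt_17_general
    {V : Type*} [AddCommGroup V] [Module ℝ V]
    {n k : ℕ} (hk : 1 ≤ k) (hkn : k ≤ n - 1)
    (B : V →ₗ[ℝ] V →ₗ[ℝ] ℝ) (hBsymm : ∀ x y, B x y = B y x)
    (S : Submodule ℝ V)
    (e : V) (heS : e ∈ S) (hrad : ∀ y ∈ S, B e y = 0)
    (K : V →ₗ[ℝ] V →ₗ[ℝ] ℝ)
    (hKe : ∀ x ∈ S, K x e = 0 ∧ K e x = 0)
    (V₀ : Submodule ℝ V) (hV₀ : V₀ ≤ S)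
    (hsec : ∀ w ∈ S, ∃ v ∈ V₀, ∃ c : ℝ, w = v + c • e)
    (g : Fin (n - 1) → V) (hgV : ∀ i, g i ∈ V₀)
    (hgon : ∀ i j, B (g i) (g j) = if i = j then 1 else 0)
    (hgspan : Submodule.span ℝ (Set.range g) = V₀)
    (lam : Fin (n - 1) → ℝ) (hmono : Monotone lam)
    (heig : ∀ i, ∀ x ∈ V₀, K (g i) x = lam i * B (g i) x) :
    IsLeast
      {t : ℝ | ∃ f : Fin k → V, (∀ i, f i ∈ S) ∧
        (∀ i j, B (f i) (f j) = if i = j then 1 else 0) ∧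
        t = ∑ i : Fin k, K (f i) (f i)}
      (∑ i : Fin k, lam (Fin.castLE hkn i)) := by
  subst hgspan
  constructor
  · refine ⟨fun i => g (Fin.castLE hkn i), fun i => hV₀ (hgV _),
      fun i j => by simp [hgon, Fin.castLE_inj], ?_⟩
    exact sum_congr rfl fun i _ => by simp [heig _ _ (hgV _), hgon]
  · rintro t ⟨f, hfS, hfon, rfl⟩
    choose v hv c hfc using fun i => hsec (f i) (hfS i)
    have hBe : ∀ y ∈ S, B y e = 0 := fun y hy => hBsymm y e ▸ hrad y hy
    have hrows : ∀ i i', ∑ j, B (g j) (v i) * B (g j) (v i') = if i = i' then 1 else 0 := by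
      intro i i'
      rw [← hfon, hfc, hfc,
        apply_add_smul_eq_of_radical B S heS hrad hBe (hV₀ (hv i)) (hV₀ (hv i')),
        apply_eq_sum_mul_of_mem_span_of_orthonormal hgon (hv i)]
    have htrace : ∀ i, K (f i) (f i) = ∑ j, lam j * B (g j) (v i) ^ 2 := by
      intro i
      rw [hfc, apply_add_smul_eq_of_radical K S heS (fun y hy => (hKe y hy).2)
        (fun y hy => (hKe y hy).1) (hV₀ (hv i)) (hV₀ (hv i)),
        apply_eq_sum_eigenvalue_mul_of_mem_span hgon K lam heig (hv i) (hv i)]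
      simp only [sq]
    simpa only [htrace] using sum_castLE_le_sum_mul_sq_of_orthonormal_rows hk hkn lam hmono
      (fun i j => B (g j) (v i)) hrows

/-- Let `S` be a null hyperplane (of an `(n+1)`-dimensional Lorentzian space) with
radical spanned by `e`, `K` a symmetric bilinear form on `S` with `K(·,e) = 0`, and
`V₀` a spacelike section with eigenvalues `λ₁ ≤ ... ≤ λ_{n−1}` of the operator
associated to `K|_{V₀}` (w.r.t. a `B`-orthonormal eigenbasis `g`). Then for each
`1 ≤ k ≤ n−1`, the least value of `tr_W(K)` over `k`-dimensional spacelike subspaces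
`W ⊆ S` (described by `B`-orthonormal families of `k` vectors in `S`) is
`λ₁ + ... + λ_k`, and it is attained. -/
theorem stmt_17
    {V : Type*} [AddCommGroup V] [Module ℝ V]
    {n k : ℕ} (hk : 1 ≤ k) (hkn : k ≤ n - 1)
    (B : V →ₗ[ℝ] V →ₗ[ℝ] ℝ) (hBsymm : ∀ x y, B x y = B y x)
    (hdimV : Module.finrank ℝ V = n + 1)
    (S : Submodule ℝ V) (hdimS : Module.finrank ℝ S = n)
    (e : V) (heS : e ∈ S) (he0 : e ≠ 0) (hrad : ∀ y ∈ S, B e y = 0)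
    (K : V →ₗ[ℝ] V →ₗ[ℝ] ℝ)
    (hKsymm : ∀ x ∈ S, ∀ y ∈ S, K x y = K y x)
    (hKe : ∀ x ∈ S, K x e = 0 ∧ K e x = 0)
    (V₀ : Submodule ℝ V) (hV₀ : V₀ ≤ S) (heV₀ : e ∉ V₀)
    (hsec : ∀ w ∈ S, ∃ v ∈ V₀, ∃ c : ℝ, w = v + c • e)
    (g : Fin (n - 1) → V) (hgV : ∀ i, g i ∈ V₀)
    (hgon : ∀ i j, B (g i) (g j) = if i = j then 1 else 0)
    (hgspan : Submodule.span ℝ (Set.range g) = V₀)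
    (lam : Fin (n - 1) → ℝ) (hmono : Monotone lam)
    (heig : ∀ i, ∀ x ∈ V₀, K (g i) x = lam i * B (g i) x) :
    IsLeast
      {t : ℝ | ∃ f : Fin k → V, (∀ i, f i ∈ S) ∧
        (∀ i j, B (f i) (f j) = if i = j then 1 else 0) ∧
        t = ∑ i : Fin k, K (f i) (f i)}
      (∑ i : Fin k, lam (Fin.castLE hkn i)) :=
  stmt_17_general hk hkn B hBsymm S e heS hrad K hKe V₀ hV₀ hsec g hgV hgon hgspan lam hmono heig
end
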